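/- Let n ≥ 2, let 1 ≤ p ≤ r < ∞, let E ⊆ ℝⁿ, and let ρ₀ > 0 and c̃ > 0. Assume that cap_p(E ∩ B̄(x,ρ), B(x,2ρ)) ≥ c̃ ρ^{n−p} for every x ∈ E and every 0 < ρ < ρ₀. Then there exists a constant c' > 0, depending only on n, p, r and c̃, such that cap_r(E ∩ B̄(x,ρ), B(x,2ρ)) ≥ c' ρ^{n−r} for every x ∈ E and every 0 < ρ < ρ₀. -/

import Mathlib

open MeasureTheory Set ENNReal

/-- The variational `p`-capacity of a set `K` relative to an open set `U ⊆ ℝⁿ`: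
`cap_p(K,U) = inf { ∫_U |Dφ|^p : φ smooth, compactly supported in U, φ ≥ 1 on K }`. -/
noncomputable def pCapacity (n : ℕ) (p : ℝ) (K U : Set (EuclideanSpace ℝ (Fin n))) : ℝ≥0∞ :=
  ⨅ (φ : EuclideanSpace ℝ (Fin n) → ℝ) (_ : ContDiff ℝ (⊤ : ℕ∞) φ) (_ : HasCompactSupport φ)
    (_ : tsupport φ ⊆ U) (_ : ∀ x ∈ K, 1 ≤ φ x),
      ∫⁻ x in U, ENNReal.ofReal (‖fderiv ℝ φ x‖ ^ p)

lemma aux_rpow_id {n p r ω ρ c : ℝ} (hp : 0 < p) (hr : 0 < r) (hω : 0 < ω) (hρ : 0 < ρ)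
    (hc : 0 < c) :
    (c * ρ ^ (n - p) / ((2 * ρ) ^ n * ω) ^ (1 - p / r)) ^ (r / p)
      = c ^ (r / p) / (ω * (2:ℝ) ^ n) ^ ((r - p) / p) * ρ ^ (n - r) := by
  have h2 : (0:ℝ) ≤ 2 := by norm_num
  rw [Real.mul_rpow (by norm_num) hρ.le,
      Real.mul_rpow (by positivity) hω.le,
      Real.mul_rpow (by positivity) (by positivity),
      ← Real.rpow_mul h2, ← Real.rpow_mul hρ.le,
      Real.div_rpow (by positivity) (by positivity),
      Real.mul_rpow hc.le (by positivity),
      Real.mul_rpow (by positivity) (by positivity),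
      Real.mul_rpow (by positivity) (by positivity),
      ← Real.rpow_mul h2, ← Real.rpow_mul hρ.le, ← Real.rpow_mul hω.le,
      ← Real.rpow_mul hρ.le,
      Real.mul_rpow hω.le (by positivity),
      ← Real.rpow_mul h2]
  have hst : (1 - p / r) * (r / p) = (r - p) / p := by field_simp
  have e1 : ρ ^ ((n - p) * (r / p)) = ρ ^ (n - r) * ρ ^ (n * (1 - p / r) * (r / p)) := by
    rw [← Real.rpow_add hρ]; congr 1; field_simp; ring
  rw [e1, hst]
  have h1 : (0:ℝ) < (2:ℝ) ^ (n * ((r - p) / p)) := by positivity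
  have h2' : (0:ℝ) < ρ ^ (n * (1 - p / r) * (r / p)) := by positivity
  have h3 : (0:ℝ) < ω ^ ((r - p) / p) := by positivity
  have e2 : n * (1 - p / r) * (r / p) = n * ((r - p) / p) := by field_simp
  rw [e2]
  field_simp

/-- A uniformly `p`-thick set is uniformly `r`-thick for every `r ≥ p`:
if `cap_p(E ∩ B̄(x,ρ), B(x,2ρ)) ≥ c̃ ρ^{n-p}` for all `x ∈ E` and `0 < ρ < ρ₀`, then there is
`c' = c'(n,p,r,c̃) > 0` with `cap_r(E ∩ B̄(x,ρ), B(x,2ρ)) ≥ c' ρ^{n-r}` for all such `x, ρ`. -/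
theorem thickness_improves_exponent (n : ℕ) (hn : 2 ≤ n) (p r : ℝ)
    (hp : 1 ≤ p) (hpr : p ≤ r) (cTilde : ℝ) (hcTilde : 0 < cTilde) :
    ∃ c' : ℝ, 0 < c' ∧
      ∀ (E : Set (EuclideanSpace ℝ (Fin n))) (ρ₀ : ℝ), 0 < ρ₀ →
        (∀ x ∈ E, ∀ ρ : ℝ, 0 < ρ → ρ < ρ₀ →
          ENNReal.ofReal (cTilde * ρ ^ ((n : ℝ) - p)) ≤
            pCapacity n p (E ∩ Metric.closedBall x ρ) (Metric.ball x (2 * ρ))) →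
        ∀ x ∈ E, ∀ ρ : ℝ, 0 < ρ → ρ < ρ₀ →
          ENNReal.ofReal (c' * ρ ^ ((n : ℝ) - r)) ≤
            pCapacity n r (E ∩ Metric.closedBall x ρ) (Metric.ball x (2 * ρ)) := by
  have hp0 : 0 < p := lt_of_lt_of_le one_pos hp
  have hr0 : 0 < r := lt_of_lt_of_le hp0 hpr
  haveI : Nontrivial (EuclideanSpace ℝ (Fin n)) := by
    apply Module.nontrivial_of_finrank_pos (R := ℝ)
    rw [finrank_euclideanSpace_fin]; omega
  set ω := (volume (Metric.ball (0 : EuclideanSpace ℝ (Fin n)) 1)).toReal with hωdef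
  have hωtop : volume (Metric.ball (0 : EuclideanSpace ℝ (Fin n)) 1) ≠ ⊤ :=
    measure_ball_lt_top.ne
  have hω : 0 < ω := ENNReal.toReal_pos (Metric.measure_ball_pos volume 0 one_pos).ne' hωtop
  refine ⟨cTilde ^ (r / p) / (ω * (2:ℝ) ^ ((n:ℕ):ℝ)) ^ ((r - p) / p), by positivity, ?_⟩
  intro E ρ₀ hρ₀ H x hx ρ hρ hρρ₀
  have h2ρ : (0:ℝ) < 2 * ρ := by linarith
  set U := Metric.ball x (2 * ρ) with hU
  -- the admissible class for exponent `r`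
  simp only [pCapacity, le_iInf_iff]
  intro φ h1 h2 h3 h4
  set f := fderiv ℝ φ with hf
  have hfc : Continuous f := h1.continuous_fderiv (by simp)
  have hmeas : AEStronglyMeasurable f (volume.restrict U) := hfc.aestronglyMeasurable
  -- lower bound from the p-capacity hypothesis
  have hA : ENNReal.ofReal (cTilde * ρ ^ ((n : ℝ) - p))
      ≤ ∫⁻ y in U, ENNReal.ofReal (‖f y‖ ^ p) := by
    refine (H x hx ρ hρ hρρ₀).trans ?_
    exact iInf_le_of_le φ (iInf_le_of_le h1 (iInf_le_of_le h2 (iInf_le_of_le h3 (iInf_le _ h4))))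
  -- rewrite integrands
  have hip : (∫⁻ y in U, ENNReal.ofReal (‖f y‖ ^ p))
      = ∫⁻ y in U, (‖f y‖₊ : ℝ≥0∞) ^ p := by
    refine lintegral_congr fun y => ?_
    rw [← ENNReal.ofReal_rpow_of_nonneg (norm_nonneg _) hp0.le, ofReal_norm, enorm_eq_nnnorm]
  have hir : (∫⁻ y in U, ENNReal.ofReal (‖f y‖ ^ r))
      = ∫⁻ y in U, (‖f y‖₊ : ℝ≥0∞) ^ r := by
    refine lintegral_congr fun y => ?_
    rw [← ENNReal.ofReal_rpow_of_nonneg (norm_nonneg _) hr0.le, ofReal_norm, enorm_eq_nnnorm]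
  rw [hir]
  set A := ∫⁻ y in U, (‖f y‖₊ : ℝ≥0∞) ^ p with hAdef
  set B := ∫⁻ y in U, (‖f y‖₊ : ℝ≥0∞) ^ r with hBdef
  rw [hip] at hA
  -- Hölder (monotonicity of Lp norms on finite measure)
  have hP0 : (ENNReal.ofReal p) ≠ 0 := by
    simp only [ne_eq, ENNReal.ofReal_eq_zero, not_le]; exact hp0
  have hR0 : (ENNReal.ofReal r) ≠ 0 := by
    simp only [ne_eq, ENNReal.ofReal_eq_zero, not_le]; exact hr0
  have hold := eLpNorm_le_eLpNorm_mul_rpow_measure_univ (μ := volume.restrict U)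
      (ENNReal.ofReal_le_ofReal hpr) hmeas
  rw [eLpNorm_eq_lintegral_rpow_enorm_toReal hP0 ENNReal.ofReal_ne_top,
      eLpNorm_eq_lintegral_rpow_enorm_toReal hR0 ENNReal.ofReal_ne_top,
      ENNReal.toReal_ofReal hp0.le, ENNReal.toReal_ofReal hr0.le,
      Measure.restrict_apply_univ] at hold
  -- volume of U
  have hV : volume U = ENNReal.ofReal ((2 * ρ) ^ n * ω) := by
    rw [hU, Measure.addHaar_ball volume x h2ρ.le, finrank_euclideanSpace_fin,
        ← ENNReal.ofReal_toReal hωtop, ← ENNReal.ofReal_mul (by positivity)]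
  set w : ℝ := (2 * ρ) ^ n * ω with hwdef
  have hw : 0 < w := by positivity
  rw [hV] at hold
  -- raise Hölder to the power p
  have hs : (0:ℝ) ≤ 1 - p / r := by
    rw [sub_nonneg]; exact (div_le_one hr0).mpr hpr
  have h2H : A ≤ B ^ (p / r) * (ENNReal.ofReal w) ^ (1 - p / r) := by
    calc A = (A ^ (1 / p)) ^ p := by
            rw [← ENNReal.rpow_mul, one_div_mul_cancel hp0.ne', ENNReal.rpow_one]
      _ ≤ (B ^ (1 / r) * (ENNReal.ofReal w) ^ (1 / p - 1 / r)) ^ p :=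
            ENNReal.rpow_le_rpow hold hp0.le
      _ = B ^ (p / r) * (ENNReal.ofReal w) ^ (1 - p / r) := by
            rw [ENNReal.mul_rpow_of_nonneg _ _ hp0.le, ← ENNReal.rpow_mul,
              ← ENNReal.rpow_mul]
            congr 2
            · field_simp
            · field_simp
  -- divide through by the volume factor
  have hWne : (ENNReal.ofReal w) ^ (1 - p / r) ≠ 0 :=
    (ENNReal.rpow_pos (ENNReal.ofReal_pos.mpr hw) ENNReal.ofReal_ne_top).ne'
  have hWtop : (ENNReal.ofReal w) ^ (1 - p / r) ≠ ⊤ :=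
    ENNReal.rpow_ne_top_of_nonneg hs ENNReal.ofReal_ne_top
  have h3H : ENNReal.ofReal (cTilde * ρ ^ ((n : ℝ) - p)) / (ENNReal.ofReal w) ^ (1 - p / r)
      ≤ B ^ (p / r) := by
    rw [ENNReal.div_le_iff hWne hWtop]
    exact hA.trans h2H
  -- raise to the power r / p
  have h4H : (ENNReal.ofReal (cTilde * ρ ^ ((n : ℝ) - p)) / (ENNReal.ofReal w) ^ (1 - p / r))
      ^ (r / p) ≤ B := by
    have := ENNReal.rpow_le_rpow h3H (by positivity : (0:ℝ) ≤ r / p)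
    rwa [← ENNReal.rpow_mul, div_mul_div_comm, mul_comm p r, div_self (by positivity),
      ENNReal.rpow_one] at this
  refine le_trans (le_of_eq ?_) h4H
  rw [ENNReal.ofReal_rpow_of_nonneg hw.le hs, ← ENNReal.ofReal_div_of_pos (by positivity),
    ENNReal.ofReal_rpow_of_nonneg (by positivity) (by positivity)]
  congr 1
  rw [hwdef, ← Real.rpow_natCast (2 * ρ) n,
    aux_rpow_id hp0 hr0 hω hρ hcTilde]
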